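/- arXiv:2511.14297 — 3 statements merged into one kernel-verified Lean document; each statement's English description precedes it below -/
import Mathlib

section
/- Let γ(t; a, b) = t^{a−1} e^{−t/b} / (Γ(a) b^{a}) for t > 0 denote the Gamma density with shape a > 0 and scale b > 0. Let K ≥ 1 and let (a_1, b_1), …, (a_K, b_K) be pairwise distinct pairs of positive reals. Then the functions t ↦ γ(t; a_k, b_k), k = 1, …, K, viewed as real-valued functions on (0, ∞), are linearly independent over ℝ: if c_1, …, c_K ∈ ℝ satisfy ∑_{k=1}^K c_k γ(t; a_k, b_k) = 0 for all t > 0, then c_1 = ⋯ = c_K = 0. -/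
/-!
As `t → ∞`, `γ(t; a, b)` decays like `t^(a-1) e^(-t/b)`, so the densities are totally ordered by
growth rate, lexicographically in `(b, a)`; distinct parameters give strictly comparable rates.
In a vanishing combination, the term with the largest parameter among those with nonzero
coefficient would be little-o of itself, so no coefficient can be nonzero.
-/

open Filter

/-- The Gamma probability density with shape `a > 0` and scale `b > 0`:
`γ(t; a, b) = t^(a-1) e^(-t/b) / (Γ(a) bᵃ)` (real powers). -/
noncomputable def gammaPdf (a b t : ℝ) : ℝ :=
  t ^ (a - 1) * Real.exp (-t / b) / (Real.Gamma a * b ^ a)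

open Asymptotics

theorem coeff_eq_zero_of_sum_eventuallyEq_zero {α ι 𝕜 : Type*} [NormedField 𝕜] {l : Filter α}
    {s : Finset ι} {f : ι → α → 𝕜} {c : ι → 𝕜} {m : ι} (hm : m ∈ s)
    (hdom : ∀ k ∈ s, k ≠ m → f k =o[l] f m) (hfm : ∃ᶠ x in l, f m x ≠ 0)
    (hsum : (fun x => ∑ k ∈ s, c k * f k x) =ᶠ[l] 0) : c m = 0 := by
  classical
  by_contra hc
  have hrest : (fun x => ∑ k ∈ s.erase m, c k * f k x) =o[l] f m :=
    IsLittleO.fun_sum fun k hk => (hdom k (Finset.mem_of_mem_erase hk)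
      (Finset.ne_of_mem_erase hk)).const_mul_left (c k)
  have hlead : (fun x => c m * f m x) =o[l] f m := by
    refine hrest.neg_left.congr' ?_ EventuallyEq.rfl
    filter_upwards [hsum] with x hx
    rw [← Finset.add_sum_erase s _ hm] at hx
    simp only [Pi.zero_apply] at hx
    linear_combination -hx
  exact isLittleO_irrefl hfm ((isLittleO_const_mul_left_iff hc).1 hlead)

theorem isLittleO_rpow_mul_exp_neg_mul_atTop {s s' β β' : ℝ} (h : toLex (β', s) < toLex (β, s')) :
    (fun t : ℝ => t ^ s * Real.exp (-β * t)) =o[atTop] fun t => t ^ s' * Real.exp (-β' * t) := by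
  have hpos : ∀ᶠ t : ℝ in atTop, 0 < t ^ s' * Real.exp (-β' * t) := by
    filter_upwards [eventually_gt_atTop 0] with t ht using by positivity
  rw [isLittleO_iff_tendsto' (hpos.mono fun t ht h0 => absurd h0 ht.ne')]
  have hratio : (fun t : ℝ => t ^ (s - s') * Real.exp (-(β - β') * t)) =ᶠ[atTop]
      fun t => t ^ s * Real.exp (-β * t) / (t ^ s' * Real.exp (-β' * t)) := by
    filter_upwards [eventually_gt_atTop 0] with t ht
    rw [Real.rpow_sub ht, show -(β - β') * t = -β * t - -β' * t by ring, Real.exp_sub,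
      div_mul_div_comm]
  refine Tendsto.congr' hratio ?_
  rcases Prod.Lex.toLex_lt_toLex.1 h with hβ | ⟨rfl, hs⟩
  · exact tendsto_rpow_mul_exp_neg_mul_atTop_nhds_zero _ _ (sub_pos.2 hβ)
  · simpa using tendsto_rpow_neg_atTop (y := s' - s) (by linarith)

theorem gammaPdf_pos {a b t : ℝ} (ha : 0 < a) (hb : 0 < b) (ht : 0 < t) : 0 < gammaPdf a b t := by
  unfold gammaPdf
  have := Real.Gamma_pos_of_pos ha
  positivity

theorem gammaPdf_eq_const_mul (a b : ℝ) :
    gammaPdf a b = fun t => (Real.Gamma a * b ^ a)⁻¹ * (t ^ (a - 1) * Real.exp (-b⁻¹ * t)) := by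
  ext t
  rw [gammaPdf, div_eq_inv_mul, neg_div, div_eq_inv_mul, neg_mul]

theorem gammaPdf_isLittleO_gammaPdf {a b a' b' : ℝ} (hb : 0 < b) (ha' : 0 < a') (hb' : 0 < b')
    (h : toLex (b, a) < toLex (b', a')) : gammaPdf a b =o[atTop] gammaPdf a' b' := by
  have hrate : toLex (b'⁻¹, a - 1) < toLex (b⁻¹, a' - 1) := by
    rcases Prod.Lex.toLex_lt_toLex.1 h with hlt | ⟨rfl, hlt⟩
    · exact Prod.Lex.toLex_lt_toLex.2 (.inl ((inv_lt_inv₀ hb' hb).2 hlt))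
    · exact Prod.Lex.toLex_lt_toLex.2 (.inr ⟨rfl, by linarith⟩)
  have hnorm : (Real.Gamma a' * b' ^ a')⁻¹ ≠ 0 := by
    have := Real.Gamma_pos_of_pos ha'
    positivity
  rw [gammaPdf_eq_const_mul a b, gammaPdf_eq_const_mul a' b', isLittleO_const_mul_right_iff hnorm]
  exact (isLittleO_rpow_mul_exp_neg_mul_atTop hrate).const_mul_left _

theorem stmt10_general (K : ℕ) (a b : Fin K → ℝ)
    (ha : ∀ k, 0 < a k) (hb : ∀ k, 0 < b k)
    (hdist : ∀ k l, k ≠ l → (a k, b k) ≠ (a l, b l)) :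
    ∀ c : Fin K → ℝ,
      (∀ t : ℝ, 0 < t → ∑ k, c k * gammaPdf (a k) (b k) t = 0) →
      ∀ k, c k = 0 := by
  intro c hc
  by_contra! ⟨k₀, hk₀⟩
  set S := Finset.univ.filter (c · ≠ 0)
  obtain ⟨m, hmS, hmax⟩ := S.exists_max_image (fun k => toLex (b k, a k)) ⟨k₀, by simpa [S]⟩
  refine (Finset.mem_filter.1 hmS).2 (coeff_eq_zero_of_sum_eventuallyEq_zero (l := atTop)
    (f := fun k => gammaPdf (a k) (b k)) hmS ?dom ?pos ?sum)
  case dom =>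
    intro k hk hkm
    refine gammaPdf_isLittleO_gammaPdf (hb k) (ha m) (hb m) ((hmax k hk).lt_of_ne fun h => ?_)
    exact hdist k m hkm (by simp_all)
  case pos =>
    exact ((eventually_gt_atTop 0).mono fun t ht => (gammaPdf_pos (ha m) (hb m) ht).ne').frequently
  case sum =>
    filter_upwards [eventually_gt_atTop 0] with t ht
    rw [Finset.sum_filter_of_ne fun k _ hk => left_ne_zero_of_mul hk]
    exact hc t ht

/-- Gamma densities with pairwise distinct (shape, scale) parameters
are linearly independent as functions on `(0, ∞)`. -/
theorem stmt10 (K : ℕ) (hK : 1 ≤ K) (a b : Fin K → ℝ)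
    (ha : ∀ k, 0 < a k) (hb : ∀ k, 0 < b k)
    (hdist : ∀ k l, k ≠ l → (a k, b k) ≠ (a l, b l)) :
    ∀ c : Fin K → ℝ,
      (∀ t : ℝ, 0 < t → ∑ k, c k * gammaPdf (a k) (b k) t = 0) →
      ∀ k, c k = 0 :=
  stmt10_general K a b ha hb hdist
end

section
/- Let γ(t; a, b) = t^{a−1} e^{−t/b} / (Γ(a) b^{a}) for t > 0 denote the Gamma density with shape a > 0 and scale b > 0. Let K ≥ 1, let π_1, …, π_K > 0 and π̃_1, …, π̃_K > 0 with ∑_k π_k = ∑_k π̃_k = 1, and let (a_1, b_1), …, (a_K, b_K) be pairwise distinct pairs of positive reals and likewise (ã_1, b̃_1), …, (ã_K, b̃_K) pairwise distinct. If ∑_{k=1}^K π_k γ(t; a_k, b_k) = ∑_{k=1}^K π̃_k γ(t; ã_k, b̃_k) for every t > 0, then there exists a permutation σ of {1, …, K} such that π_k = π̃_{σ(k)}, a_k = ã_{σ(k)}, and b_k = b̃_{σ(k)} for all k. That is, finite mixtures of Gamma densities with pairwise distinct component parameters are identifiable up to label swapping. -/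
open Filter

open Topology


/-- ratio tendsto zero -/
lemma ratio_tendsto_zero (α β b b' : ℝ) (hb : 0 < b) (hb' : 0 < b')
    (h : b < b' ∨ (b = b' ∧ α < β)) :
    Tendsto (fun t : ℝ => t ^ (α - β) * Real.exp (t / b' - t / b)) atTop (𝓝 0) := by
  rcases h with h | ⟨hbe, hlt⟩
  · have hε : 0 < 1 / b - 1 / b' := by
      have := one_div_lt_one_div_of_lt hb h
      linarith
    have := tendsto_rpow_mul_exp_neg_mul_atTop_nhds_zero (α - β) _ hε
    refine this.congr fun t => ?_
    congr 1
    congr 1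
    field_simp
    ring
  · subst hbe
    have := tendsto_rpow_neg_atTop (by linarith : 0 < β - α)
    have h2 : Tendsto (fun t : ℝ => t ^ (α - β)) atTop (𝓝 0) := by
      refine this.congr fun t => ?_
      rw [neg_sub]
    refine h2.congr fun t => ?_
    rw [sub_self, Real.exp_zero, mul_one]

/-- Linear independence of t^α e^{-t/b} families. -/
lemma li_gamma : ∀ (S : Finset (ℝ × ℝ)), (∀ p ∈ S, 0 < p.2) →
    ∀ c : ℝ × ℝ → ℝ,
    (∀ t : ℝ, 0 < t → ∑ p ∈ S, c p * (t ^ p.1 * Real.exp (-t / p.2)) = 0) →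
    ∀ p ∈ S, c p = 0 := by
  intro S
  induction S using Finset.strongInduction with
  | _ S ih =>
    intro hpos c hsum p hp
    have hne : S.Nonempty := ⟨p, hp⟩
    obtain ⟨q, hq, hqmax⟩ := S.exists_max_image
      (fun p => toLex ((p.2, p.1) : ℝ × ℝ)) hne
    -- the dominant term has zero coefficient
    have hdom : ∀ r ∈ S, r ≠ q → r.2 < q.2 ∨ (r.2 = q.2 ∧ r.1 < q.1) := by
      intro r hr hrq
      have := hqmax r hr
      rw [Prod.Lex.le_iff] at this
      rcases this with h | ⟨h1, h2⟩
      · exact Or.inl h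
      · refine Or.inr ⟨h1, lt_of_le_of_ne h2 fun h3 => hrq (Prod.ext h3 h1)⟩
    set F : ℝ → ℝ := fun t =>
      ∑ r ∈ S, c r * (t ^ (r.1 - q.1) * Real.exp (t / q.2 - t / r.2)) with hF
    have hFzero : ∀ t : ℝ, 0 < t → F t = 0 := by
      intro t ht
      have hgt : 0 < t ^ q.1 * Real.exp (-t / q.2) :=
        mul_pos (Real.rpow_pos_of_pos ht _) (Real.exp_pos _)
      have : F t * (t ^ q.1 * Real.exp (-t / q.2))
          = ∑ r ∈ S, c r * (t ^ r.1 * Real.exp (-t / r.2)) := by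
        rw [hF, Finset.sum_mul]
        refine Finset.sum_congr rfl fun r hr => ?_
        rw [Real.rpow_sub ht,
          show t / q.2 - t / r.2 = (-t / r.2) - (-t / q.2) by ring, Real.exp_sub]
        have h1 := (Real.rpow_pos_of_pos ht q.1).ne'
        have h2 := (Real.exp_pos (-t / q.2)).ne'
        field_simp
      have h0 := hsum t ht
      rw [← this] at h0
      exact (mul_eq_zero.mp h0).resolve_right hgt.ne'
    have hcq : c q = 0 := by
      have hlim : Tendsto F atTop (𝓝 (∑ r ∈ S, if r = q then c r else 0)) := by
        refine tendsto_finset_sum _ fun r hr => ?_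
        by_cases hrq : r = q
        · subst hrq
          simp only [if_pos rfl, sub_self]
          have : (fun t : ℝ => c r * (t ^ (0:ℝ) * Real.exp 0)) = fun _ => c r := by
            funext t; simp
          rw [this]
          exact tendsto_const_nhds
        · simp only [if_neg hrq]
          have := (ratio_tendsto_zero r.1 q.1 r.2 q.2 (hpos r hr) (hpos q hq)
            (hdom r hr hrq)).const_mul (c r)
          simpa using this
      have hzero : Tendsto F atTop (𝓝 0) := by
        refine Tendsto.congr' ?_ (tendsto_const_nhds (x := (0:ℝ)))
        filter_upwards [eventually_gt_atTop (0:ℝ)] with t ht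
        exact (hFzero t ht).symm
      have := tendsto_nhds_unique hlim hzero
      simpa [Finset.sum_ite_eq' S q, hq] using this
    have hsub : S.erase q ⊂ S := Finset.erase_ssubset hq
    have hih := ih (S.erase q) hsub
      (fun r hr => hpos r (Finset.mem_of_mem_erase hr)) c ?_
    · by_cases hpq : p = q
      · rw [hpq]; exact hcq
      · exact hih p (Finset.mem_erase.mpr ⟨hpq, hp⟩)
    · intro t ht
      have := hsum t ht
      rw [← Finset.add_sum_erase S _ hq, hcq, zero_mul, zero_add] at this
      exact this

/-- finite mixtures of Gamma densities with positive weights and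
pairwise distinct component parameters are identifiable up to label swapping. -/
theorem stmt11 (K : ℕ) (hK : 1 ≤ K)
    (π π' : Fin K → ℝ) (a b a' b' : Fin K → ℝ)
    (hπ : ∀ k, 0 < π k) (hπ' : ∀ k, 0 < π' k)
    (hπsum : ∑ k, π k = 1) (hπ'sum : ∑ k, π' k = 1)
    (ha : ∀ k, 0 < a k) (hb : ∀ k, 0 < b k)
    (ha' : ∀ k, 0 < a' k) (hb' : ∀ k, 0 < b' k)
    (hdist : ∀ k l, k ≠ l → (a k, b k) ≠ (a l, b l))
    (hdist' : ∀ k l, k ≠ l → (a' k, b' k) ≠ (a' l, b' l))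
    (hmix : ∀ t : ℝ, 0 < t →
      ∑ k, π k * gammaPdf (a k) (b k) t = ∑ k, π' k * gammaPdf (a' k) (b' k) t) :
    ∃ σ : Equiv.Perm (Fin K),
      ∀ k, π k = π' (σ k) ∧ a k = a' (σ k) ∧ b k = b' (σ k) := by
  classical
  -- normalizing constants and weights
  set C : ℝ → ℝ → ℝ := fun x y => Real.Gamma x * y ^ x with hC
  have hCpos : ∀ x y : ℝ, 0 < x → 0 < y → 0 < C x y := fun x y hx hy =>
    mul_pos (Real.Gamma_pos_of_pos hx) (Real.rpow_pos_of_pos hy x)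
  set w : Fin K → ℝ := fun k => π k / C (a k) (b k) with hw
  set w' : Fin K → ℝ := fun k => π' k / C (a' k) (b' k) with hw'
  have hwpos : ∀ k, 0 < w k := fun k =>
    div_pos (hπ k) (hCpos _ _ (ha k) (hb k))
  have hw'pos : ∀ k, 0 < w' k := fun k =>
    div_pos (hπ' k) (hCpos _ _ (ha' k) (hb' k))
  set P : Fin K → ℝ × ℝ := fun k => (a k - 1, b k) with hP
  set P' : Fin K → ℝ × ℝ := fun k => (a' k - 1, b' k) with hP'
  have hPinj : Function.Injective P := by
    intro k l hkl
    by_contra hne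
    apply hdist k l hne
    have h1 : a k - 1 = a l - 1 := congrArg Prod.fst hkl
    have h2 : b k = b l := congrArg Prod.snd hkl
    exact Prod.ext (by linarith) h2
  have hP'inj : Function.Injective P' := by
    intro k l hkl
    by_contra hne
    apply hdist' k l hne
    have h1 : a' k - 1 = a' l - 1 := congrArg Prod.fst hkl
    have h2 : b' k = b' l := congrArg Prod.snd hkl
    exact Prod.ext (by linarith) h2
  set S : Finset (ℝ × ℝ) :=
    (Finset.univ.image P) ∪ (Finset.univ.image P') with hS
  set c : ℝ × ℝ → ℝ := fun q =>
    (∑ k, if P k = q then w k else 0) - (∑ k, if P' k = q then w' k else 0) with hc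
  have hSpos : ∀ q ∈ S, 0 < q.2 := by
    intro q hq
    rw [hS, Finset.mem_union] at hq
    rcases hq with hq | hq <;> obtain ⟨k, -, rfl⟩ := Finset.mem_image.mp hq
    · exact hb k
    · exact hb' k
  -- the mixture identity gives a vanishing combination
  have hcomb : ∀ t : ℝ, 0 < t →
      ∑ q ∈ S, c q * (t ^ q.1 * Real.exp (-t / q.2)) = 0 := by
    intro t ht
    have key : ∀ (Q : Fin K → ℝ × ℝ) (v : Fin K → ℝ), (∀ k, Q k ∈ S) →
        ∑ q ∈ S, (∑ k, if Q k = q then v k else 0) * (t ^ q.1 * Real.exp (-t / q.2))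
          = ∑ k, v k * (t ^ (Q k).1 * Real.exp (-t / (Q k).2)) := by
      intro Q v hQ
      calc ∑ q ∈ S, (∑ k, if Q k = q then v k else 0) * (t ^ q.1 * Real.exp (-t / q.2))
          = ∑ q ∈ S, ∑ k, (if Q k = q then v k * (t ^ q.1 * Real.exp (-t / q.2)) else 0) := by
            refine Finset.sum_congr rfl fun q _ => ?_
            rw [Finset.sum_mul]
            refine Finset.sum_congr rfl fun k _ => ?_
            split <;> simp
        _ = ∑ k, ∑ q ∈ S, (if Q k = q then v k * (t ^ q.1 * Real.exp (-t / q.2)) else 0) :=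
            Finset.sum_comm
        _ = ∑ k, v k * (t ^ (Q k).1 * Real.exp (-t / (Q k).2)) := by
            refine Finset.sum_congr rfl fun k _ => ?_
            rw [Finset.sum_ite_eq S (Q k) (fun q => v k * (t ^ q.1 * Real.exp (-t / q.2)))]
            rw [if_pos (hQ k)]
    have h1 := key P w (fun k => Finset.mem_union_left _
      (Finset.mem_image_of_mem P (Finset.mem_univ k)))
    have h2 := key P' w' (fun k => Finset.mem_union_right _
      (Finset.mem_image_of_mem P' (Finset.mem_univ k)))
    have e1 : ∑ k, w k * (t ^ (P k).1 * Real.exp (-t / (P k).2))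
        = ∑ k, π k * gammaPdf (a k) (b k) t := by
      refine Finset.sum_congr rfl fun k _ => ?_
      simp only [hw, hP, hC, gammaPdf]
      ring
    have e2 : ∑ k, w' k * (t ^ (P' k).1 * Real.exp (-t / (P' k).2))
        = ∑ k, π' k * gammaPdf (a' k) (b' k) t := by
      refine Finset.sum_congr rfl fun k _ => ?_
      simp only [hw', hP', hC, gammaPdf]
      ring
    simp only [hc, sub_mul]
    rw [Finset.sum_sub_distrib, h1, h2, e1, e2, hmix t ht, sub_self]
  have hczero := li_gamma S hSpos c hcomb
  -- build the matching
  have key : ∀ k, ∃ l, a k = a' l ∧ b k = b' l ∧ π k = π' l := by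
    intro k
    have hmem : P k ∈ S := by
      rw [hS, Finset.mem_union]
      exact Or.inl (Finset.mem_image_of_mem P (Finset.mem_univ k))
    have h0 := hczero (P k) hmem
    simp only [hc] at h0
    have hA : (∑ l, if P l = P k then w l else 0) = w k := by
      rw [Finset.sum_eq_single k]
      · rw [if_pos rfl]
      · intro l _ hlk
        rw [if_neg (fun h => hlk (hPinj h))]
      · intro h; exact absurd (Finset.mem_univ k) h
    rw [hA, sub_eq_zero] at h0
    -- the right sum must be positive, so some l matches
    by_cases hex : ∃ l, P' l = P k
    · obtain ⟨l, hl⟩ := hex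
      have hB : (∑ m, if P' m = P k then w' m else 0) = w' l := by
        rw [Finset.sum_eq_single l]
        · rw [if_pos hl]
        · intro m _ hml
          rw [if_neg (fun h => hml (hP'inj (h.trans hl.symm)))]
        · intro h; exact absurd (Finset.mem_univ l) h
      rw [hB] at h0
      have ha1 : a k = a' l := by
        have := congrArg Prod.fst hl
        simp only [hP, hP'] at this
        linarith
      have hb1 : b k = b' l := (congrArg Prod.snd hl).symm
      refine ⟨l, ha1, hb1, ?_⟩
      have hCeq : C (a k) (b k) = C (a' l) (b' l) := by rw [ha1, hb1]
      simp only [hw, hw'] at h0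
      rw [← hCeq] at h0
      exact (div_left_inj' (hCpos _ _ (ha k) (hb k)).ne').mp h0
    · exfalso
      push_neg at hex
      have : (∑ m, if P' m = P k then w' m else 0) = 0 := by
        apply Finset.sum_eq_zero
        intro m _
        rw [if_neg (hex m)]
      rw [this] at h0
      exact (hwpos k).ne h0.symm
  choose σ0 hσ1 hσ2 hσ3 using key
  have hσinj : Function.Injective σ0 := by
    intro k l hkl
    by_contra hne
    apply hdist k l hne
    rw [hσ1 k, hσ2 k, hkl, ← hσ1 l, ← hσ2 l]
  exact ⟨Equiv.ofBijective σ0 (Finite.injective_iff_bijective.mp hσinj),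
    fun k => ⟨hσ3 k, hσ1 k, hσ2 k⟩⟩
end

section
/- Let γ(t; a, b) = t^{a−1} e^{−t/b} / (Γ(a) b^{a}) for t > 0 denote the Gamma density with shape a > 0 and scale b > 0. Let K ≥ 1, m ≥ 1, and let (a_1, b_1), …, (a_K, b_K) be pairwise distinct pairs of positive reals. Then the product functions Φ_k : (0, ∞)^m → ℝ defined by Φ_k(t_1, …, t_m) = ∏_{j=1}^m γ(t_j; a_k, b_k), k = 1, …, K, are linearly independent over ℝ: if c_1, …, c_K ∈ ℝ satisfy ∑_{k=1}^K c_k Φ_k(t_1, …, t_m) = 0 for all (t_1, …, t_m) ∈ (0, ∞)^m, then c_1 = ⋯ = c_K = 0. -/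
/-!
Restricted to the diagonal `t₁ = ⋯ = tₘ = t`, each `Φ_k` is a nonzero multiple of
`t ^ ((a_k - 1) m) e^{-(m / b_k) t}`, and `k ↦ ((a_k - 1) m, m / b_k)` is injective because `m ≠ 0`.
Functions `t ^ α e^{-β t}` with distinct pairs `(α, β)` are linearly independent on `(0, ∞)`:
in a vanishing combination, divide by the term with nonzero coefficient that grows fastest
as `t → ∞`; the quotient tends to that coefficient, which must therefore vanish.
-/

open Filter

open Topology

lemma tendsto_rpow_mul_exp_neg_mul_atTop_nhds_zero_of_lt {α β : ℝ}
    (h : 0 < β ∨ β = 0 ∧ α < 0) :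
    Tendsto (fun t : ℝ => t ^ α * Real.exp (-β * t)) atTop (𝓝 0) := by
  rcases h with hβ | ⟨rfl, hα⟩
  · exact tendsto_rpow_mul_exp_neg_mul_atTop_nhds_zero α β hβ
  · simpa using tendsto_rpow_neg_atTop (neg_pos.2 hα)

/-- The growth of `t ^ α * exp (-β * t)` as `t → ∞` is ordered lexicographically by `(-β, α)`. -/
lemma coeff_eq_zero_of_sum_rpow_mul_exp_eq_zero {ι : Type*} {s : Finset ι} {α β c : ι → ℝ}
    (h : ∀ t > 0, ∑ i ∈ s, c i * (t ^ α i * Real.exp (-β i * t)) = 0) {i₀ : ι} (hi₀ : i₀ ∈ s)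
    (hdom : ∀ j ∈ s, j ≠ i₀ → toLex (-β j, α j) < toLex (-β i₀, α i₀)) :
    c i₀ = 0 := by
  classical
  have hrescaled : ∀ t > 0, ∑ j ∈ s, c j * (t ^ (α j - α i₀) * Real.exp (-(β j - β i₀) * t))
      = t ^ (-α i₀) * Real.exp (β i₀ * t) * ∑ j ∈ s, c j * (t ^ α j * Real.exp (-β j * t)) := by
    intro t ht
    rw [Finset.mul_sum]
    refine Finset.sum_congr rfl fun j _ => ?_
    rw [sub_eq_add_neg (α j), Real.rpow_add ht,
      show -(β j - β i₀) * t = -β j * t + β i₀ * t by ring, Real.exp_add]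
    ring
  have hterm : ∀ j ∈ s, Tendsto (fun t : ℝ => c j * (t ^ (α j - α i₀) *
      Real.exp (-(β j - β i₀) * t))) atTop (𝓝 (if j = i₀ then c i₀ else 0)) := by
    intro j hj
    by_cases hji : j = i₀
    · subst hji
      refine tendsto_const_nhds.congr' ?_
      filter_upwards [eventually_gt_atTop 0] with t ht
      simp
    · rw [if_neg hji, ← mul_zero (c j)]
      refine (tendsto_rpow_mul_exp_neg_mul_atTop_nhds_zero_of_lt ?_).const_mul (c j)
      rcases Prod.Lex.toLex_lt_toLex.1 (hdom j hj hji) with hβ | ⟨hβ, hα⟩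
      · exact Or.inl (by linarith)
      · exact Or.inr ⟨by linarith, by linarith⟩
  have hlim := tendsto_finsetSum s hterm
  rw [Finset.sum_ite_eq' s i₀, if_pos hi₀] at hlim
  refine tendsto_nhds_unique hlim (tendsto_const_nhds.congr' ?_)
  filter_upwards [eventually_gt_atTop 0] with t ht
  rw [hrescaled t ht, h t ht, mul_zero]

lemma eq_zero_of_sum_rpow_mul_exp_eq_zero {ι : Type*} [Fintype ι] {α β c : ι → ℝ}
    (hinj : Function.Injective fun i => (α i, β i))
    (h : ∀ t > 0, ∑ i, c i * (t ^ α i * Real.exp (-β i * t)) = 0) (i : ι) :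
    c i = 0 := by
  classical
  by_contra hci
  set s := Finset.univ.filter fun j => c j ≠ 0
  obtain ⟨i₀, hi₀, hmax⟩ := s.exists_max_image (fun j => toLex (-β j, α j)) ⟨i, by simp [s, hci]⟩
  have hs : ∀ t > 0, ∑ j ∈ s, c j * (t ^ α j * Real.exp (-β j * t)) = 0 := fun t ht => by
    rw [Finset.sum_filter_of_ne fun j _ hj => left_ne_zero_of_mul hj]
    exact h t ht
  have hdom : ∀ j ∈ s, j ≠ i₀ → toLex (-β j, α j) < toLex (-β i₀, α i₀) := by
    refine fun j hj hji => lt_of_le_of_ne (hmax j hj) fun heq => hji (hinj ?_)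
    simp only [toLex_inj, Prod.mk.injEq, neg_inj] at heq
    simp [heq.1, heq.2]
  exact (Finset.mem_filter.1 hi₀).2 (coeff_eq_zero_of_sum_rpow_mul_exp_eq_zero hs hi₀ hdom)

lemma gammaPdf_pow {a b t : ℝ} (ht : 0 < t) (m : ℕ) :
    gammaPdf a b t ^ m = ((Real.Gamma a * b ^ a) ^ m)⁻¹ *
      (t ^ ((a - 1) * m) * Real.exp (-(m / b) * t)) := by
  rw [gammaPdf, div_pow, mul_pow, Real.rpow_mul ht.le, Real.rpow_natCast, ← Real.exp_nat_mul]
  field_simp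

theorem stmt12_general (K m : ℕ) (hm : 1 ≤ m) (a b : Fin K → ℝ)
    (ha : ∀ k, 0 < a k) (hb : ∀ k, 0 < b k)
    (hdist : ∀ k l, k ≠ l → (a k, b k) ≠ (a l, b l)) :
    ∀ c : Fin K → ℝ,
      (∀ t : Fin m → ℝ, (∀ j, 0 < t j) →
        ∑ k, c k * ∏ j, gammaPdf (a k) (b k) (t j) = 0) →
      ∀ k, c k = 0 := by
  intro c h k
  have hm₀ : (m : ℝ) ≠ 0 := by positivity
  have hnorm : ∀ k, (Real.Gamma (a k) * b k ^ a k) ^ m ≠ 0 := fun k =>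
    pow_ne_zero m (mul_pos (Real.Gamma_pos_of_pos (ha k)) (Real.rpow_pos_of_pos (hb k) _)).ne'
  have hinj : Function.Injective fun k => ((a k - 1) * m, m / b k) := by
    intro k l hkl
    by_contra hkl'
    obtain ⟨hak, hbk⟩ := Prod.mk.inj hkl
    refine hdist k l hkl' (Prod.ext ?_ ?_)
    · simpa using mul_right_cancel₀ hm₀ hak
    · simpa [div_eq_mul_inv, hm₀] using hbk
  have hdiag : ∀ t > 0, ∑ k, c k * ((Real.Gamma (a k) * b k ^ a k) ^ m)⁻¹ *
      (t ^ ((a k - 1) * m) * Real.exp (-(m / b k) * t)) = 0 := fun t ht => by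
    simpa [Finset.prod_const, gammaPdf_pow ht, mul_assoc] using h (fun _ => t) fun _ => ht
  simpa [hnorm k] using eq_zero_of_sum_rpow_mul_exp_eq_zero hinj hdiag k

/-- for pairwise distinct Gamma parameters, the product densities
`Φ_k(t_1, …, t_m) = ∏_{j=1}^m γ(t_j; a_k, b_k)` on `(0, ∞)^m` are linearly
independent over `ℝ`. -/
theorem stmt12 (K m : ℕ) (hK : 1 ≤ K) (hm : 1 ≤ m) (a b : Fin K → ℝ)
    (ha : ∀ k, 0 < a k) (hb : ∀ k, 0 < b k)
    (hdist : ∀ k l, k ≠ l → (a k, b k) ≠ (a l, b l)) :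
    ∀ c : Fin K → ℝ,
      (∀ t : Fin m → ℝ, (∀ j, 0 < t j) →
        ∑ k, c k * ∏ j, gammaPdf (a k) (b k) (t j) = 0) →
      ∀ k, c k = 0 :=
  stmt12_general K m hm a b ha hb hdist
end
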